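/- Two-term functional relation for lower characteristic (1,1): for all real a, c and all complex u, v, θ[a,c;1,1](u,v) · θ[a,c;0,0](u,v) = Θ[a,c;1,1](2u,2v) · Θ[0,0;1,1](0,0) + Θ[a+1,c+1;1,1](2u,2v) · Θ[1,1;1,1](0,0). -/

import Mathlib

open Complex

/-- Genus-two theta function with real characteristics `a c b d`
(upper characteristics `a, c`, lower characteristics `b, d`),
moduli `τ₁ τ₂ τ₁₂` and complex arguments `x y`. -/
noncomputable def theta (τ₁ τ₂ τ₁₂ : ℂ) (a c b d : ℝ) (x y : ℂ) : ℂ :=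
  ∑' p : ℤ × ℤ,
    Complex.exp
      ((Real.pi : ℂ) * Complex.I *
          (τ₁ * ((p.1 : ℂ) + (a : ℂ) / 2) ^ 2 + τ₂ * ((p.2 : ℂ) + (c : ℂ) / 2) ^ 2 +
            2 * τ₁₂ * ((p.1 : ℂ) + (a : ℂ) / 2) * ((p.2 : ℂ) + (c : ℂ) / 2)) +
        2 * (Real.pi : ℂ) * Complex.I *
          (((p.1 : ℂ) + (a : ℂ) / 2) * (x + (b : ℂ) / 2) +
            ((p.2 : ℂ) + (c : ℂ) / 2) * (y + (d : ℂ) / 2)))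

/-- The same theta function with doubled moduli `2τ₁, 2τ₂, 2τ₁₂`. -/
noncomputable def Theta2 (τ₁ τ₂ τ₁₂ : ℂ) (a c b d : ℝ) (x y : ℂ) : ℂ :=
  theta (2 * τ₁) (2 * τ₂) (2 * τ₁₂) a c b d x y

/-!
Multiply the two series and group the pairs `(m, m')` of lattice points by the parity
`e ∈ {0,1}²` of `m + m'`: the substitution `m = k + K + e`, `m' = k - K` sends the shifted
indices `s, s'` to `S = (s + s') / 2` and `R = (s - s') / 2`, and `Q(s) + Q(s') = 2 Q(S) + 2 Q(R)`
for the quadratic form `Q` of the moduli, so each parity class is a product of two theta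
series with doubled moduli. For lower characteristics `(1,1)` and `(0,0)` the classes
`e = (0,1)` and `e = (1,0)` carry a theta constant with odd characteristic, which is odd
under `p ↦ -p - e` and hence vanishes.
-/

open Real

noncomputable def thetaTerm (τ₁ τ₂ τ₁₂ : ℂ) (a c b d : ℝ) (x y : ℂ) (p : ℤ × ℤ) : ℂ :=
  Complex.exp
    (π * I * (τ₁ * ((p.1 : ℂ) + a / 2) ^ 2 + τ₂ * ((p.2 : ℂ) + c / 2) ^ 2 +
        2 * τ₁₂ * ((p.1 : ℂ) + a / 2) * ((p.2 : ℂ) + c / 2)) +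
      2 * π * I * (((p.1 : ℂ) + a / 2) * (x + b / 2) + ((p.2 : ℂ) + c / 2) * (y + d / 2)))

lemma theta_eq_tsum (τ₁ τ₂ τ₁₂ : ℂ) (a c b d : ℝ) (x y : ℂ) :
    theta τ₁ τ₂ τ₁₂ a c b d x y = ∑' p, thetaTerm τ₁ τ₂ τ₁₂ a c b d x y p := rfl

lemma norm_thetaTerm (τ₁ τ₂ τ₁₂ : ℂ) (a c b d : ℝ) (x y : ℂ) (p : ℤ × ℤ) :
    ‖thetaTerm τ₁ τ₂ τ₁₂ a c b d x y p‖ =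
      Real.exp (-π * (τ₁.im * (p.1 + a / 2) ^ 2 + τ₂.im * (p.2 + c / 2) ^ 2
          + 2 * τ₁₂.im * (p.1 + a / 2) * (p.2 + c / 2))
        - 2 * π * ((p.1 + a / 2) * x.im + (p.2 + c / 2) * y.im)) := by
  rw [thetaTerm, Complex.norm_exp]
  congr 1
  simp [pow_two]
  ring

lemma exists_pos_mul_sq_add_sq_le {A B C : ℝ} (hA : 0 < A) (hB : 0 < B) (h : C ^ 2 < A * B) :
    ∃ ε > 0, ∀ s t : ℝ, ε * (s ^ 2 + t ^ 2) ≤ A * s ^ 2 + B * t ^ 2 + 2 * C * s * t := by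
  -- this `ε` satisfies `(A - ε) * (B - ε) = C ^ 2 + ε ^ 2`
  set ε := (A * B - C ^ 2) / (A + B)
  have hε : ε * (A + B) = A * B - C ^ 2 := div_mul_cancel₀ _ (by positivity)
  have hεA : ε < A := by
    rw [div_lt_iff₀ (by positivity)]
    nlinarith [sq_nonneg C]
  refine ⟨ε, div_pos (by linarith) (by positivity), fun s t => ?_⟩
  nlinarith [sq_nonneg ((A - ε) * s + C * t), sq_nonneg (ε * t),
    mul_nonneg (sub_pos.2 hεA).le (sq_nonneg t)]

lemma summable_exp_neg_gaussian_shift {ε : ℝ} (hε : 0 < ε) (a X : ℝ) :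
    Summable fun m : ℤ => Real.exp (-π * (ε * (m + a / 2) ^ 2 + 2 * (m + a / 2) * X)) := by
  have hθ := ((summable_jacobiTheta₂_term_iff (I * (X + ε * a / 2)) (I * ε)).2
    (by simpa using hε)).norm.mul_left (Real.exp (-π * (ε * a ^ 2 / 4 + a * X)))
  refine hθ.congr fun m => ?_
  rw [norm_jacobiTheta₂_term, ← Real.exp_add]
  congr 1
  simp
  ring

lemma summable_norm_thetaTerm {τ₁ τ₂ τ₁₂ : ℂ}
    (hτ₁ : 0 < τ₁.im) (hτ₂ : 0 < τ₂.im) (hτ : τ₁₂.im ^ 2 < τ₁.im * τ₂.im)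
    (a c b d : ℝ) (x y : ℂ) :
    Summable fun p : ℤ × ℤ => ‖thetaTerm τ₁ τ₂ τ₁₂ a c b d x y p‖ := by
  obtain ⟨ε, hε, hQ⟩ := exists_pos_mul_sq_add_sq_le hτ₁ hτ₂ hτ
  have hg := (summable_exp_neg_gaussian_shift hε a x.im).mul_of_nonneg
    (summable_exp_neg_gaussian_shift hε c y.im) (fun _ => (Real.exp_pos _).le)
    (fun _ => (Real.exp_pos _).le)
  refine hg.of_nonneg_of_le (fun _ => norm_nonneg _) fun p => ?_
  rw [norm_thetaTerm, ← Real.exp_add, Real.exp_le_exp]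
  nlinarith [hQ (p.1 + a / 2) (p.2 + c / 2), Real.pi_pos]

lemma thetaTerm_mul_thetaTerm (τ₁ τ₂ τ₁₂ : ℂ) (a c b d a' c' b' d' : ℝ) (x y x' y' : ℂ)
    (e δ : ℕ) (k l K L : ℤ) :
    thetaTerm τ₁ τ₂ τ₁₂ a c b d x y (k + K + e, l + L + δ) *
        thetaTerm τ₁ τ₂ τ₁₂ a' c' b' d' x' y' (k - K, l - L) =
      thetaTerm (2 * τ₁) (2 * τ₂) (2 * τ₁₂) ((a + a') / 2 + e) ((c + c') / 2 + δ)
          (b + b') (d + d') (x + x') (y + y') (k, l) *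
        thetaTerm (2 * τ₁) (2 * τ₂) (2 * τ₁₂) ((a - a') / 2 + e) ((c - c') / 2 + δ)
          (b - b') (d - d') (x - x') (y - y') (K, L) := by
  simp only [thetaTerm, ← Complex.exp_add]
  congr 1
  push_cast
  ring

def sumDiffEquiv : Bool × ℤ × ℤ ≃ ℤ × ℤ where
  toFun q := (q.2.1 + q.2.2 + q.1.toNat, q.2.1 - q.2.2)
  invFun p := (decide ((p.1 + p.2) % 2 = 1), (p.1 + p.2) / 2, (p.1 + p.2) / 2 - p.2)
  left_inv := by
    rintro ⟨_ | _, k, K⟩ <;> simp <;> omega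
  right_inv := by
    rintro ⟨m, m'⟩
    rcases Int.emod_two_eq (m + m') with h | h <;> simp [h] <;> omega

def sumDiffEquiv₂ : (Bool × Bool) × (ℤ × ℤ) × (ℤ × ℤ) ≃ (ℤ × ℤ) × (ℤ × ℤ) :=
  ((Equiv.prodCongr (Equiv.refl _) (Equiv.prodProdProdComm ℤ ℤ ℤ ℤ)).trans
    ((Equiv.prodProdProdComm Bool Bool (ℤ × ℤ) (ℤ × ℤ)).trans
      (Equiv.prodCongr sumDiffEquiv sumDiffEquiv))).trans (Equiv.prodProdProdComm ℤ ℤ ℤ ℤ)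

lemma sumDiffEquiv₂_apply (e δ : Bool) (k l K L : ℤ) :
    sumDiffEquiv₂ ((e, δ), (k, l), (K, L)) =
      ((k + K + e.toNat, l + L + δ.toNat), (k - K, l - L)) := rfl

theorem theta_mul_theta {τ₁ τ₂ τ₁₂ : ℂ}
    (hτ₁ : 0 < τ₁.im) (hτ₂ : 0 < τ₂.im) (hτ : τ₁₂.im ^ 2 < τ₁.im * τ₂.im)
    (a c b d a' c' b' d' : ℝ) (x y x' y' : ℂ) :
    theta τ₁ τ₂ τ₁₂ a c b d x y * theta τ₁ τ₂ τ₁₂ a' c' b' d' x' y' =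
      ∑ e : Bool × Bool,
        Theta2 τ₁ τ₂ τ₁₂ ((a + a') / 2 + e.1.toNat) ((c + c') / 2 + e.2.toNat)
            (b + b') (d + d') (x + x') (y + y') *
          Theta2 τ₁ τ₂ τ₁₂ ((a - a') / 2 + e.1.toNat) ((c - c') / 2 + e.2.toNat)
            (b - b') (d - d') (x - x') (y - y') := by
  have hθ := summable_norm_thetaTerm hτ₁ hτ₂ hτ
  have hΘ := summable_norm_thetaTerm (τ₁ := 2 * τ₁) (τ₂ := 2 * τ₂) (τ₁₂ := 2 * τ₁₂)
    (by simpa using hτ₁) (by simpa using hτ₂) (by simp; nlinarith)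
  have hsplit := sumDiffEquiv₂.summable_iff.2 (summable_mul_of_summable_norm
    (hθ a c b d x y) (hθ a' c' b' d' x' y'))
  simp only [Function.comp_def] at hsplit
  rw [theta_eq_tsum, theta_eq_tsum,
    tsum_mul_tsum_of_summable_norm (hθ _ _ _ _ _ _) (hθ _ _ _ _ _ _),
    ← sumDiffEquiv₂.tsum_eq, hsplit.tsum_prod' hsplit.prod_factor, tsum_fintype]
  refine Finset.sum_congr rfl fun ⟨e, δ⟩ _ => ?_
  rw [Theta2, Theta2, theta_eq_tsum, theta_eq_tsum,
    tsum_mul_tsum_of_summable_norm (hΘ _ _ _ _ _ _) (hΘ _ _ _ _ _ _)]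
  refine tsum_congr fun ⟨⟨k, l⟩, ⟨K, L⟩⟩ => ?_
  rw [sumDiffEquiv₂_apply]
  exact thetaTerm_mul_thetaTerm τ₁ τ₂ τ₁₂ a c b d a' c' b' d' x y x' y' _ _ k l K L

theorem theta_zero_zero_eq_zero_of_odd (τ₁ τ₂ τ₁₂ : ℂ) (a c b d : ℤ) (h : Odd (a * b + c * d)) :
    theta τ₁ τ₂ τ₁₂ a c b d 0 0 = 0 := by
  obtain ⟨j, hj⟩ := h
  set f := thetaTerm τ₁ τ₂ τ₁₂ a c b d 0 0
  have hσ : Function.Involutive fun p : ℤ × ℤ => (-p.1 - a, -p.2 - c) := fun p => by simp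
  -- `p ↦ -p - (a, c)` negates `p + (a, c) / 2`: the quadratic part of the exponent is unchanged
  -- and the linear part picks up `exp (-π i (a b + c d)) = -1`
  have hodd : ∀ p, f (hσ.toPerm _ p) = -f p := by
    rintro ⟨m, n⟩
    have hj' : ((a * b + c * d : ℤ) : ℂ) = 2 * j + 1 := by exact_mod_cast hj
    calc f (-m - a, -n - c)
        = f (m, n) * Complex.exp ((-(m * b + n * d) - j - 1 : ℤ) * (2 * π * I)) *
            Complex.exp (π * I) := by
          simp only [f, thetaTerm, ← Complex.exp_add]
          congr 1
          push_cast at hj' ⊢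
          linear_combination (-(π : ℂ) * I) * hj'
      _ = -f (m, n) := by rw [Complex.exp_int_mul_two_pi_mul_I, Complex.exp_pi_mul_I]; ring
  have := (hσ.toPerm _).tsum_eq f
  rw [tsum_congr hodd, tsum_neg] at this
  rw [theta_eq_tsum]
  linear_combination -this / 2

theorem two_term_relation_11 (τ₁ τ₂ τ₁₂ : ℂ)
    (hτ₁ : 0 < τ₁.im) (hτ₂ : 0 < τ₂.im) (hτ : τ₁₂.im ^ 2 < τ₁.im * τ₂.im)
    (a c : ℝ) (u v : ℂ) :
    theta τ₁ τ₂ τ₁₂ a c 1 1 u v * theta τ₁ τ₂ τ₁₂ a c 0 0 u v =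
      Theta2 τ₁ τ₂ τ₁₂ a c 1 1 (2 * u) (2 * v) * Theta2 τ₁ τ₂ τ₁₂ 0 0 1 1 0 0 +
        Theta2 τ₁ τ₂ τ₁₂ (a + 1) (c + 1) 1 1 (2 * u) (2 * v) *
          Theta2 τ₁ τ₂ τ₁₂ 1 1 1 1 0 0 := by
  have h01 : Theta2 τ₁ τ₂ τ₁₂ 0 1 1 1 0 0 = 0 := by
    simpa [Theta2] using
      theta_zero_zero_eq_zero_of_odd (2 * τ₁) (2 * τ₂) (2 * τ₁₂) 0 1 1 1 (by decide)
  have h10 : Theta2 τ₁ τ₂ τ₁₂ 1 0 1 1 0 0 = 0 := by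
    simpa [Theta2] using
      theta_zero_zero_eq_zero_of_odd (2 * τ₁) (2 * τ₂) (2 * τ₁₂) 1 0 1 1 (by decide)
  rw [theta_mul_theta hτ₁ hτ₂ hτ, Fintype.sum_prod_type, Fintype.sum_bool, Fintype.sum_bool,
    Fintype.sum_bool]
  simp only [add_self_div_two, sub_self, zero_div, Bool.toNat_false, Bool.toNat_true,
    Nat.cast_zero, Nat.cast_one, add_zero, zero_add, sub_zero, h01, h10, mul_zero,
    two_mul u, two_mul v]
  ring
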